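/- arXiv:math/0106237 — 4 statements merged into one kernel-verified Lean document; each statement's English description precedes it below -/
import Mathlib

section
/- Let (V,d) be a differential graded k-module with H²(V)=0 and let d_1 be a 1-cocycle (δ(d_1)=0). Then there exists a sequence of 1-cochains {d_i}_{i≥2} such that d_t = d + t d_1 + t² d_2 + ⋯ is a differential on V[[t]], i.e., (V[[t]], d_t) is a deformation of (V,d). -/
open Finset

/-- The k[[t]]-linear extension to V[[t]] ≅ (ℕ → V) of a formal power series
`∑ tⁱ D i` of k-linear endomorphisms of `V` (Cauchy-product action on coefficients). -/
noncomputable def ext {k V : Type*} [Field k] [AddCommGroup V] [Module k V]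
    (D : ℕ → Module.End k V) : Module.End k (ℕ → V) where
  toFun v n := ∑ i ∈ Finset.range (n + 1), D i (v (n - i))
  map_add' u v := by
    funext n
    simp [Finset.sum_add_distrib]
  map_smul' c v := by
    funext n
    simp [Finset.smul_sum]

/-- The trivial deformation `d_t = d` of a differential `d`. -/
noncomputable def trivDef {k V : Type*} [Field k] [AddCommGroup V] [Module k V]
    (d : Module.End k V) : ℕ → Module.End k V :=
  fun n => if n = 0 then d else 0

/-- Equivalence of deformations: a k[[t]]-linear automorphism `φ_t` of `V[[t]]` with
`φ_t ≡ Id (mod t)` and `d_t φ_t = φ_t d_t'`. -/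
def IsEquivDef {k V : Type*} [Field k] [AddCommGroup V] [Module k V]
    (D D' : ℕ → Module.End k V) : Prop :=
  ∃ Φ : ℕ → Module.End k V, Φ 0 = 1 ∧ Function.Bijective (ext Φ) ∧
    ext D * ext Φ = ext Φ * ext D'

section Aux
variable {k V : Type*} [Field k] [AddCommGroup V] [Module k V]

lemma ext_apply (A : ℕ → Module.End k V) (v : ℕ → V) (n : ℕ) :
    ext A v n = ∑ i ∈ Finset.range (n + 1), A i (v (n - i)) := rfl

lemma ext_zero : ext (fun _ => (0 : Module.End k V)) = 0 := by
  apply LinearMap.ext; intro v; funext n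
  simp [ext_apply]

lemma ext_mul (A B : ℕ → Module.End k V) :
    ext A * ext B = ext (fun n => ∑ i ∈ Finset.range (n + 1), A i * B (n - i)) := by
  apply LinearMap.ext; intro v; funext n
  show ext A (ext B v) n = _
  simp only [ext_apply, map_sum, LinearMap.sum_apply, Module.End.mul_apply]
  rw [Finset.sum_sigma', Finset.sum_sigma']
  refine Finset.sum_nbij' (i := fun p => ⟨p.1 + p.2, p.1⟩) (j := fun p => ⟨p.2, p.1 - p.2⟩)
    ?_ ?_ ?_ ?_ ?_
  · rintro ⟨a, b⟩ hp
    simp only [Finset.mem_sigma, Finset.mem_range] at hp ⊢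
    omega
  · rintro ⟨a, b⟩ hp
    simp only [Finset.mem_sigma, Finset.mem_range] at hp ⊢
    omega
  · rintro ⟨a, b⟩ hp; simp
  · rintro ⟨a, b⟩ hp
    simp only [Finset.mem_sigma, Finset.mem_range] at hp
    dsimp only
    rw [Sigma.mk.inj_iff]
    exact ⟨by omega, heq_of_eq (by omega)⟩
  · rintro ⟨a, b⟩ hp
    simp only [Finset.mem_sigma, Finset.mem_range] at hp
    have h1 : a + b - a = b := by omega
    have h2 : n - a - b = n - (a + b) := by omega
    simp [h1, h2]

noncomputable def Dseq (d d1 : Module.End k V) (s : Module.End k V → Module.End k V) :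
    ℕ → Module.End k V
  | 0 => d
  | 1 => d1
  | n+2 => s (-(∑ i ∈ (Finset.Ioo 0 (n+2)).attach,
      Dseq d d1 s i.1 * Dseq d d1 s (n + 2 - i.1)))
  decreasing_by
  · have := Finset.mem_Ioo.mp i.2; omega
  · have := Finset.mem_Ioo.mp i.2; omega

lemma Dseq_add_two (d d1 : Module.End k V) (s : Module.End k V → Module.End k V) (m : ℕ) :
    Dseq d d1 s (m+2) = s (-(∑ i ∈ Finset.Ioo 0 (m+2),
      Dseq d d1 s i * Dseq d d1 s (m + 2 - i))) := by
  rw [Dseq]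
  exact congrArg s (congrArg Neg.neg (Finset.sum_attach (Ioo 0 (m+2))
    (fun i => Dseq d d1 s i * Dseq d d1 s (m + 2 - i))))

lemma triple_reindex (D : ℕ → Module.End k V) (N : ℕ) :
    ∑ i ∈ Ioo 0 N, ∑ j ∈ Ioo 0 (N-i), D i * (D j * D (N-i-j))
      = ∑ i ∈ Ioo 0 N, ∑ j ∈ Ioo 0 i, D j * D (i-j) * D (N-i) := by
  rw [Finset.sum_sigma', Finset.sum_sigma']
  refine Finset.sum_nbij' (i := fun p => ⟨p.1 + p.2, p.1⟩) (j := fun p => ⟨p.2, p.1 - p.2⟩)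
    ?_ ?_ ?_ ?_ ?_
  · rintro ⟨a, b⟩ hp
    simp only [Finset.mem_sigma, Finset.mem_Ioo] at hp ⊢
    omega
  · rintro ⟨a, b⟩ hp
    simp only [Finset.mem_sigma, Finset.mem_Ioo] at hp ⊢
    omega
  · rintro ⟨a, b⟩ hp
    simp only [Finset.mem_sigma, Finset.mem_Ioo] at hp
    dsimp only
    rw [Sigma.mk.inj_iff]
    exact ⟨by omega, heq_of_eq (by omega)⟩
  · rintro ⟨a, b⟩ hp
    simp only [Finset.mem_sigma, Finset.mem_Ioo] at hp
    dsimp only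
    rw [Sigma.mk.inj_iff]
    exact ⟨by omega, heq_of_eq (by omega)⟩
  · rintro ⟨a, b⟩ hp
    simp only [Finset.mem_sigma, Finset.mem_Ioo] at hp
    have h1 : a + b - a = b := by omega
    have h2 : N - a - b = N - (a + b) := by omega
    dsimp only
    rw [h1, h2, mul_assoc]

lemma S_decomp (d : Module.End k V) (D : ℕ → Module.End k V) (hD0 : D 0 = d)
    (i : ℕ) (hi : 0 < i) :
    ∑ j ∈ range (i+1), D j * D (i - j)
      = d * D i + D i * d + ∑ j ∈ Ioo 0 i, D j * D (i-j) := by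
  have hset : range (i+1) = insert 0 (insert i (Ioo 0 i)) := by
    ext x; simp only [mem_range, mem_insert, mem_Ioo]; omega
  rw [hset, Finset.sum_insert (by simp; omega), Finset.sum_insert (by simp)]
  simp only [Nat.sub_zero, Nat.sub_self, hD0]
  abel

lemma conv_zero (d d1 : Module.End k V) (s : Module.End k V → Module.End k V)
    (hd : d * d = 0) (hd1 : d * d1 + d1 * d = 0)
    (hs : ∀ g : Module.End k V, d * g - g * d = 0 → d * s g + s g * d = g) :
    ∀ n, ∑ i ∈ range (n+1), Dseq d d1 s i * Dseq d d1 s (n - i) = 0 := by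
  intro n
  induction n using Nat.strong_induction_on with
  | _ n IH =>
  set D := Dseq d d1 s with hDdef
  have hD0 : D 0 = d := by rw [hDdef, Dseq]
  have hD1 : D 1 = d1 := by rw [hDdef, Dseq]
  match n with
  | 0 => simpa [hD0] using hd
  | 1 =>
    rw [show (1:ℕ)+1 = 2 from rfl, Finset.sum_range_succ, Finset.sum_range_succ,
      Finset.sum_range_zero]
    simpa [hD0, hD1] using hd1
  | (m+2) =>
    set N := m + 2 with hN
    set T : Module.End k V := ∑ i ∈ Ioo 0 N, D i * D (N - i) with hT
    -- per-index consequence of IH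
    have hSi : ∀ i, 0 < i → i < N →
        d * D i + D i * d + ∑ j ∈ Ioo 0 i, D j * D (i-j) = 0 := by
      intro i hi0 hiN
      rw [← S_decomp d D hD0 i hi0]
      exact IH i hiN
    -- cocycle condition for T
    have hcoc : d * T - T * d = 0 := by
      have step1 : d * T - T * d
          = ∑ i ∈ Ioo 0 N, (D i * (∑ j ∈ Ioo 0 (N-i), D j * D (N-i-j))
              - (∑ j ∈ Ioo 0 i, D j * D (i-j)) * D (N-i)) := by
        rw [hT, Finset.mul_sum, Finset.sum_mul, ← Finset.sum_sub_distrib]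
        refine Finset.sum_congr rfl fun i hi => ?_
        have hmem := Finset.mem_Ioo.mp hi
        have h1 : d * D i = -(D i * d + ∑ j ∈ Ioo 0 i, D j * D (i-j)) :=
          eq_neg_of_add_eq_zero_left (by rw [← add_assoc]; exact hSi i hmem.1 hmem.2)
        have hmem2 : 0 < N - i ∧ N - i < N := by omega
        have h2 : D (N-i) * d
            = -(d * D (N-i) + ∑ j ∈ Ioo 0 (N-i), D j * D ((N-i)-j)) := by
          refine eq_neg_of_add_eq_zero_left ?_
          rw [← hSi (N-i) hmem2.1 hmem2.2]; abel
        calc d * (D i * D (N-i)) - D i * D (N-i) * d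
            = (d * D i) * D (N-i) - D i * (D (N-i) * d) := by noncomm_ring
          _ = (-(D i * d + ∑ j ∈ Ioo 0 i, D j * D (i-j))) * D (N-i)
              - D i * (-(d * D (N-i) + ∑ j ∈ Ioo 0 (N-i), D j * D ((N-i)-j))) := by
              rw [h1, h2]
          _ = _ := by noncomm_ring
      rw [step1, Finset.sum_sub_distrib]
      have e1 : ∑ i ∈ Ioo 0 N, D i * (∑ j ∈ Ioo 0 (N-i), D j * D (N-i-j))
          = ∑ i ∈ Ioo 0 N, ∑ j ∈ Ioo 0 (N-i), D i * (D j * D (N-i-j)) := by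
        refine Finset.sum_congr rfl fun i _ => ?_
        rw [Finset.mul_sum]
      have e2 : ∑ i ∈ Ioo 0 N, (∑ j ∈ Ioo 0 i, D j * D (i-j)) * D (N-i)
          = ∑ i ∈ Ioo 0 N, ∑ j ∈ Ioo 0 i, D j * D (i-j) * D (N-i) := by
        refine Finset.sum_congr rfl fun i _ => ?_
        rw [Finset.sum_mul]
      rw [e1, e2, triple_reindex, sub_self]
    -- D N = s (-T)
    have hDN : D N = s (-T) := Dseq_add_two d d1 s m
    have hsT : d * s (-T) + s (-T) * d = -T := by
      refine hs (-T) ?_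
      have : d * (-T) - (-T) * d = -(d * T - T * d) := by noncomm_ring
      rw [this, hcoc, neg_zero]
    rw [S_decomp d D hD0 N (by omega), ← hT, hDN, hsT]
    exact neg_add_cancel T
end Aux

/-- If `H²(V) = 0` (every 2-cocycle `g`, i.e. `dg - gd = 0`, is `δ` of a 1-cochain) and
`d_1` is a 1-cocycle (`δ(d_1) = d d_1 + d_1 d = 0`), then `d_1` extends to a deformation
`d_t = d + t d_1 + t² d_2 + ⋯` with `d_t² = 0` on `V[[t]]`. -/
theorem unobstructed_of_H2_eq_zero {k V : Type*} [Field k]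
    [AddCommGroup V] [Module k V]
    (d : Module.End k V) (hd : d * d = 0)
    (H2 : ∀ g : Module.End k V, d * g - g * d = 0 →
      ∃ f : Module.End k V, d * f + f * d = g)
    (d1 : Module.End k V) (hd1 : d * d1 + d1 * d = 0) :
    ∃ D : ℕ → Module.End k V, D 0 = d ∧ D 1 = d1 ∧ ext D * ext D = 0 := by
  classical
  set s : Module.End k V → Module.End k V :=
    fun g => if h : d * g - g * d = 0 then (H2 g h).choose else 0 with hsdef
  have hs : ∀ g : Module.End k V, d * g - g * d = 0 → d * s g + s g * d = g := by
    intro g h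
    rw [hsdef]
    simp only [dif_pos h]
    exact (H2 g h).choose_spec
  refine ⟨Dseq d d1 s, by rw [Dseq], by rw [Dseq], ?_⟩
  rw [ext_mul]
  have h0 : (fun n => ∑ i ∈ Finset.range (n + 1), Dseq d d1 s i * Dseq d d1 s (n - i))
      = fun _ => (0 : Module.End k V) := funext (conv_zero d d1 s hd hd1 hs)
  rw [h0, ext_zero]
end

section
/- With (V,d) and d_1 as above, the primary obstruction O_1 = −d_1² equals −x_1 ∂/∂x_6 and is a coboundary: O_1 = δ(−x_3 ∂/∂x_6) = d∘(−x_3 ∂/∂x_6) − (−x_3 ∂/∂x_6)∘d. -/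
open Finset

/-- The basis vector `x_i` of the graded module `V = ⊕_{p≥1} ⟨x_{2p-1}, x_{2p}⟩`,
modelled inside `ℕ →₀ k` (only indices `i ≥ 1` are used). -/
noncomputable def xv (k : Type*) [Field k] (i : ℕ) : ℕ →₀ k := Finsupp.single i 1

/-- The elementary operator `x_i ∂/∂x_j`, sending `x_j ↦ x_i` and all other
basis vectors to `0`. -/
noncomputable def Elem (k : Type*) [Field k] (i j : ℕ) : Module.End k (ℕ →₀ k) :=
  (Finsupp.lsingle i).comp (Finsupp.lapply j)

/-- The degree-`p` homogeneous piece `V_p = ⟨x_{2p-1}, x_{2p}⟩` (and `V_p = 0` for `p ≤ 0`). -/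
noncomputable def piece (k : Type*) [Field k] (p : ℕ) : Submodule k (ℕ →₀ k) :=
  if p = 0 then ⊥ else Submodule.span k {xv k (2 * p - 1), xv k (2 * p)}

lemma elem_apply_xv {k : Type*} [Field k] (i j m : ℕ) :
    Elem k i j (xv k m) = if m = j then xv k i else 0 := by
  simp only [Elem, xv, LinearMap.comp_apply, Finsupp.lapply_apply, Finsupp.lsingle_apply,
    Finsupp.single_apply]
  split_ifs <;> simp

lemma ext_xv {k : Type*} [Field k] (f g : Module.End k (ℕ →₀ k))
    (h : ∀ j, f (xv k j) = g (xv k j)) : f = g := by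
  apply Finsupp.lhom_ext
  intro a b
  have hb : (Finsupp.single a b : ℕ →₀ k) = b • xv k a := by
    simp [xv, Finsupp.smul_single]
  rw [hb, map_smul, map_smul, h]

/-- With `d : x_{6i-3} ↦ x_{6i-5}` and `d_1 = x_1 ∂/∂x_4 + ∑_{i=1}^{n-1} x_{6i-2} ∂/∂x_{6i}`,
the primary obstruction `O_1 = -d_1²` equals `-x_1 ∂/∂x_6` and is the coboundary
`δ(-x_3 ∂/∂x_6) = d ∘ (-x_3 ∂/∂x_6) - (-x_3 ∂/∂x_6) ∘ d`. -/
theorem example_primary_obstruction_cobounds {k : Type*} [Field k] (n : ℕ) (hn : 2 ≤ n)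
    (d d1 : Module.End k (ℕ →₀ k))
    (hd : ∀ j : ℕ, d (xv k j) = if j % 6 = 3 then xv k (j - 2) else 0)
    (hd1 : ∀ j : ℕ, d1 (xv k j) =
      if j = 4 then xv k 1
      else if j % 6 = 0 ∧ 6 ≤ j ∧ j ≤ 6 * (n - 1) then xv k (j - 2)
      else 0) :
    -(d1 * d1) = -(Elem k 1 6) ∧
    -(d1 * d1) = d * (-(Elem k 3 6)) - (-(Elem k 3 6)) * d := by
  have h1 : -(d1 * d1) = -(Elem k 1 6) := by
    apply ext_xv
    intro j
    simp only [LinearMap.neg_apply, Module.End.mul_apply, elem_apply_xv, neg_inj]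
    by_cases hj : j = 6
    · subst hj
      rw [hd1 6]
      have h6n : (6:ℕ) ≤ 6 * (n - 1) := by omega
      norm_num [h6n]
      rw [hd1 4]
      norm_num
    · rw [hd1 j, if_neg hj]
      split_ifs with h4 h6
      · rw [hd1 1]; norm_num
      · rw [hd1 (j - 2)]
        have e1 : j - 2 ≠ 4 := by omega
        have e2 : (j - 2) % 6 ≠ 0 := by omega
        simp [e1, e2]
      · exact map_zero d1
  refine ⟨h1, ?_⟩
  rw [h1]
  symm
  apply ext_xv
  intro j
  simp only [LinearMap.sub_apply, Module.End.mul_apply, LinearMap.neg_apply, map_neg,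
    elem_apply_xv]
  by_cases hj : j = 6
  · subst hj
    norm_num
    rw [hd 3]
    norm_num
    rw [hd 6]
    norm_num
  · rw [if_neg hj, hd j]
    split_ifs with h3
    · have e : j - 2 ≠ 6 := by omega
      rw [elem_apply_xv, if_neg e]
      simp
    · simp
end

section
/- With (V,d) as above, the 2-cochain O = −x_4 ∂/∂x_8 is a cocycle that does not cobound: there is no 1-cochain f with df + fd = −x_4 ∂/∂x_8. Hence H²(V) ≠ 0. -/
open Finset

lemma Elem_xv (k : Type*) [Field k] (i j a : ℕ) :
    Elem k i j (xv k a) = if a = j then xv k i else 0 := by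
  simp [Elem, xv, Finsupp.single_apply]
  split <;> simp

/-- With `d : x_{6i-3} ↦ x_{6i-5}`, the 2-cochain `O = -x_4 ∂/∂x_8` is a 2-cocycle
(`δ(O) = dO - Od = 0`) that does not cobound: no 1-cochain `f` (degree `-1`) satisfies
`df + fd = O`. Hence `H²(V) ≠ 0`. -/
theorem example_H2_nonzero {k : Type*} [Field k]
    (d : Module.End k (ℕ →₀ k))
    (hd : ∀ j : ℕ, d (xv k j) = if j % 6 = 3 then xv k (j - 2) else 0) :
    d * (-(Elem k 4 8)) - (-(Elem k 4 8)) * d = 0 ∧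
    ¬ ∃ f : Module.End k (ℕ →₀ k),
        (∀ j : ℕ, 1 ≤ j → f (xv k j) ∈ piece k ((j + 1) / 2 - 1)) ∧
        d * f + f * d = -(Elem k 4 8) := by
  have hxne : (xv k 4 : ℕ →₀ k) ≠ 0 := by
    simp [xv, Finsupp.single_eq_zero]
  constructor
  · apply Finsupp.lhom_ext
    intro a b
    have hb : (Finsupp.single a b : ℕ →₀ k) = b • xv k a := by
      simp [xv, Finsupp.smul_single]
    simp only [hb, map_smul, LinearMap.zero_apply, smul_zero]
    simp only [LinearMap.sub_apply, Module.End.mul_apply, LinearMap.neg_apply, map_neg,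
      Elem_xv]
    by_cases ha : a = 8
    · subst ha
      rw [if_pos rfl, hd 4, hd 8]
      norm_num
    · rw [if_neg ha, hd a]
      by_cases h3 : a % 6 = 3
      · rw [if_pos h3, Elem_xv, if_neg (by omega)]
        simp
      · rw [if_neg h3]
        simp
  · rintro ⟨f, hf, heq⟩
    have h8 := hf 8 (by norm_num)
    have hp : piece k ((8 + 1) / 2 - 1) = Submodule.span k {xv k 5, xv k 6} := by
      norm_num [piece]
    rw [hp, Submodule.mem_span_pair] at h8
    obtain ⟨a, b, hab⟩ := h8
    have key := congrArg (fun g : Module.End k (ℕ →₀ k) => g (xv k 8)) heq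
    simp only [LinearMap.add_apply, Module.End.mul_apply, LinearMap.neg_apply, Elem_xv,
      if_pos rfl] at key
    rw [hd 8] at key
    norm_num at key
    rw [← hab, map_add, map_smul, map_smul, hd 5, hd 6] at key
    norm_num at key
    exact hxne key
end

section
/- With (V,d) as above, the 1-cochain d_1 = x_4 ∂/∂x_6 + x_6 ∂/∂x_8 is a 1-cocycle (δ(d_1)=0) whose primary obstruction O_1 = −d_1² = −x_4 ∂/∂x_8 is not a coboundary. Hence the linear approximation d + t d_1 is obstructed at order 1: there is no d_2 ∈ C¹(V) with δ(d_2) = O_1. -/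
open Finset

/-- With `d : x_{6i-3} ↦ x_{6i-5}`, the 1-cochain `d_1 = x_4 ∂/∂x_6 + x_6 ∂/∂x_8` is a
1-cocycle (`δ(d_1) = d d_1 + d_1 d = 0`) whose primary obstruction `O_1 = -d_1²` equals
`-x_4 ∂/∂x_8` and is not a coboundary: the approximation `d + t d_1` is obstructed at
order 1, i.e. there is no 1-cochain `d_2` with `δ(d_2) = O_1`. -/
theorem example_obstructed_at_order_one {k : Type*} [Field k]
    (d d1 : Module.End k (ℕ →₀ k))
    (hd : ∀ j : ℕ, d (xv k j) = if j % 6 = 3 then xv k (j - 2) else 0)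
    (hd1 : ∀ j : ℕ, d1 (xv k j) =
      if j = 6 then xv k 4 else if j = 8 then xv k 6 else 0) :
    d * d1 + d1 * d = 0 ∧
    -(d1 * d1) = -(Elem k 4 8) ∧
    ¬ ∃ d2 : Module.End k (ℕ →₀ k),
        (∀ j : ℕ, 1 ≤ j → d2 (xv k j) ∈ piece k ((j + 1) / 2 - 1)) ∧
        d * d2 + d2 * d = -(d1 * d1) := by
  have h1 : d * d1 + d1 * d = 0 := by
    apply Finsupp.lhom_ext
    intro a b
    have key : (d * d1 + d1 * d) (xv k a) = 0 := by
      simp only [LinearMap.add_apply, Module.End.mul_apply]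
      rcases eq_or_ne a 6 with h6 | h6
      · subst h6; simp [hd, hd1]
      rcases eq_or_ne a 8 with h8 | h8
      · subst h8; simp [hd, hd1]
      rw [hd1 a, if_neg h6, if_neg h8, map_zero, hd a]
      split_ifs with h3
      · rw [hd1, if_neg (by omega), if_neg (by omega)]; simp
      · simp
    have hs : Finsupp.single a b = b • xv k a := by
      simp [xv, Finsupp.smul_single]
    rw [hs, map_smul, key]
    simp
  have h2 : d1 * d1 = Elem k 4 8 := by
    apply Finsupp.lhom_ext
    intro a b
    have key : (d1 * d1) (xv k a) = (Elem k 4 8) (xv k a) := by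
      simp only [Module.End.mul_apply]
      rcases eq_or_ne a 8 with h8 | h8
      · subst h8
        rw [hd1 8]; norm_num
        rw [hd1 6]; norm_num
        simp [Elem, xv]
      rcases eq_or_ne a 6 with h6 | h6
      · subst h6
        rw [hd1 6]; norm_num
        rw [hd1 4]; norm_num
        simp [Elem, xv, Finsupp.single_apply]
      · rw [hd1 a, if_neg h6, if_neg h8, map_zero]
        simp [Elem, xv, Finsupp.single_apply, h8]
    have hs : Finsupp.single a b = b • xv k a := by
      simp [xv, Finsupp.smul_single]
    rw [hs, map_smul, map_smul, key]
  refine ⟨h1, by rw [h2], ?_⟩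
  rintro ⟨d2, hdeg, heq⟩
  have h8 := hdeg 8 (by norm_num)
  have hp : piece k ((8 + 1) / 2 - 1) = Submodule.span k {xv k 5, xv k 6} := by
    norm_num [piece]
  rw [hp, Submodule.mem_span_pair] at h8
  obtain ⟨a, b, hab⟩ := h8
  have happ := congrArg (fun f : Module.End k (ℕ →₀ k) => f (xv k 8)) heq
  simp only [LinearMap.add_apply, Module.End.mul_apply, LinearMap.neg_apply] at happ
  rw [hd 8] at happ
  norm_num at happ
  rw [hd1 8] at happ
  norm_num at happ
  rw [hd1 6] at happ
  norm_num at happ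
  rw [← hab, map_add, map_smul, map_smul, hd 5, hd 6] at happ
  norm_num at happ
  have h4 := congrArg (fun f : ℕ →₀ k => f 4) happ
  simp [xv, Finsupp.single_apply] at h4
end
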